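/- Let n ≥ 2 and let G be the directed path graph with node set {1, …, n}, edge set {(i, i+1) : 1 ≤ i ≤ n−1}, and identical edge likelihoods p(i, i+1) = 1 − 1/n. For the seed set S = {1}: f^corr({1}) = 1 + (n−1)/2 and f^ic({1}) = Σ_{i=0}^{n−1} (1 − 1/n)^i = n·(1 − (1 − 1/n)^n). -/

import Mathlib

open scoped BigOperators

namespace CorrIM

variable {V : Type*} [Fintype V] [DecidableEq V]

/-- A node `i` is influenced: `i ∈ S`, or `i` is reachable from some node of `S`
along the live edges of the scenario `c`. -/
def influenced (c : Finset (V × V)) (S : Finset V) (i : V) : Prop :=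
  ∃ s ∈ S, Relation.ReflTransGen (fun a b : V => (a, b) ∈ c) s i

/-- `R c S` : the number of influenced nodes in scenario `c` with seed set `S`. -/
noncomputable def R (c : Finset (V × V)) (S : Finset V) : ℕ :=
  Set.ncard {i : V | influenced c S i}

/-- The Fréchet class `Θ` : probability distributions on scenarios (subsets of `E`)
whose marginals agree with the edge likelihoods `p`. -/
def memTheta (E : Finset (V × V)) (p : V × V → ℝ) (θ : Finset (V × V) → ℝ) : Prop :=
  (∀ c, 0 ≤ θ c) ∧ (∀ c, θ c ≠ 0 → c ⊆ E) ∧ (∑ c : Finset (V × V), θ c) = 1 ∧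
    ∀ e ∈ E, (∑ c : Finset (V × V), if e ∈ c then θ c else 0) = p e

/-- Expected number of influenced nodes under the distribution `θ`. -/
noncomputable def expInf (θ : Finset (V × V) → ℝ) (S : Finset V) : ℝ :=
  ∑ c : Finset (V × V), θ c * (R c S : ℝ)

/-- The correlation robust influence function `f^corr`. -/
noncomputable def fcorr (E : Finset (V × V)) (p : V × V → ℝ) (S : Finset V) : ℝ :=
  sInf {x : ℝ | ∃ θ, memTheta E p θ ∧ x = expInf θ S}

open Classical in
/-- Probability of the event `A` under the distribution `θ`. -/
noncomputable def prob (θ : Finset (V × V) → ℝ) (A : Finset (V × V) → Prop) : ℝ :=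
  ∑ c : Finset (V × V), if A c then θ c else 0

/-- `γ` (a list of nodes `i₀, i₁, …, i_λ`, `λ ≥ 1`) is a directed path from the
seed set `S` to the node `i` using edges of `E`. -/
def IsPathFrom (E : Finset (V × V)) (S : Finset V) (i : V) (γ : List V) : Prop :=
  2 ≤ γ.length ∧ (∃ s ∈ S, γ.head? = some s) ∧ γ.getLast? = some i ∧
    γ.Chain' (fun a b : V => (a, b) ∈ E)

/-- The list of edges `(i₀,i₁), …, (i_{λ-1}, i_λ)` of a path `γ = [i₀, …, i_λ]`. -/
def pathEdges (γ : List V) : List (V × V) := γ.zip γ.tail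

/-- The weight `L(γ) = 1 - ∑_{l=1}^{λ} (1 - p(i_{l-1}, i_l))` of a path. -/
noncomputable def L (p : V × V → ℝ) (γ : List V) : ℝ :=
  1 - ((pathEdges γ).map (fun e => 1 - p e)).sum

/-- `π*_i = max(0, max_{γ ∈ Γ(S,i)} L(γ))`, with value `0` when `Γ(S,i) = ∅`. -/
noncomputable def piStar (E : Finset (V × V)) (p : V × V → ℝ) (S : Finset V) (i : V) : ℝ :=
  sSup (insert 0 {x : ℝ | ∃ γ : List V, IsPathFrom E S i γ ∧ x = L p γ})

/-- The independent cascade distribution `θ_ic` : each edge of `E` is live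
independently with probability `p e`. -/
noncomputable def thetaIC (E : Finset (V × V)) (p : V × V → ℝ) (c : Finset (V × V)) : ℝ :=
  if c ⊆ E then (∏ e ∈ c, p e) * ∏ e ∈ E \ c, (1 - p e) else 0

/-- The independent cascade influence function `f^ic`. -/
noncomputable def fic (E : Finset (V × V)) (p : V × V → ℝ) (S : Finset V) : ℝ :=
  expInf (thetaIC E p) S

end CorrIM

/-! On the path, node `i` is reached from node `0` exactly when the `i` edges of the prefix
ending at `i` are all live. Under independence this has probability `p ^ i`, which gives `f^ic`.
For any `θ ∈ Θ` the union bound over the prefix gives probability at least `1 - i / n`, so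
`f^corr ≥ ∑ i < n, (1 - i / n) = 1 + (n - 1) / 2`. The bound is attained by cutting the path
after a uniformly random node `k < n`: each edge survives with probability `1 - 1 / n`, and
exactly `k + 1` nodes are reached. -/

namespace CorrIM

section Scenarios

variable {V : Type*} [Fintype V] {E A : Finset (V × V)} {p : V × V → ℝ}
  {θ : Finset (V × V) → ℝ}

open Classical in
lemma R_eq_sum_indicator (c : Finset (V × V)) (S : Finset V) :
    (R c S : ℝ) = ∑ i : V, if influenced c S i then 1 else 0 := by
  rw [R, ← Set.coe_toFinset {i | influenced c S i}, Set.ncard_coe_finset, Finset.sum_boole]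
  simp

lemma expInf_eq_sum_prob (θ : Finset (V × V) → ℝ) (S : Finset V) :
    expInf θ S = ∑ i : V, prob θ (fun c => influenced c S i) := by
  simp only [expInf, prob, R_eq_sum_indicator, Finset.mul_sum, mul_ite, mul_one, mul_zero]
  exact Finset.sum_comm

lemma prob_congr {P Q : Finset (V × V) → Prop} (h : ∀ c, θ c ≠ 0 → (P c ↔ Q c)) :
    prob θ P = prob θ Q := by
  classical
  refine Finset.sum_congr rfl fun c _ => ?_
  by_cases hc : θ c = 0
  · simp [hc]
  · exact if_congr (h c hc) rfl rfl

lemma prob_not (hθ : ∑ c, θ c = 1) (P : Finset (V × V) → Prop) :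
    prob θ (fun c => ¬ P c) = 1 - prob θ P := by
  classical
  rw [← hθ, prob, prob, ← Finset.sum_sub_distrib]
  refine Finset.sum_congr rfl fun c _ => ?_
  split_ifs <;> simp_all

lemma prob_exists_le_sum {ι : Type*} (hθ : ∀ c, 0 ≤ θ c) (s : Finset ι)
    (P : ι → Finset (V × V) → Prop) :
    prob θ (fun c => ∃ i ∈ s, P i c) ≤ ∑ i ∈ s, prob θ (P i) := by
  classical
  simp only [prob]
  rw [Finset.sum_comm]
  refine Finset.sum_le_sum fun c _ => ?_
  have hterm : ∀ j ∈ s, 0 ≤ if P j c then θ c else 0 := fun j _ => by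
    split_ifs <;> simp [hθ c]
  split_ifs with h
  · obtain ⟨i, hi, hPi⟩ := h
    calc θ c = if P i c then θ c else 0 := (if_pos hPi).symm
      _ ≤ ∑ j ∈ s, if P j c then θ c else 0 :=
        Finset.single_le_sum (f := fun j => if P j c then θ c else 0) hterm hi
  · exact Finset.sum_nonneg hterm

variable [DecidableEq V]

lemma memTheta.prob_mem (hθ : memTheta E p θ) {e : V × V} (he : e ∈ E) :
    prob θ (fun c => e ∈ c) = p e := by
  rw [← hθ.2.2.2 e he, prob]
  congr!

lemma memTheta.one_sub_sum_le_prob_subset (hθ : memTheta E p θ) (hA : A ⊆ E) :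
    1 - ∑ e ∈ A, (1 - p e) ≤ prob θ (fun c => A ⊆ c) := by
  have hunion := prob_exists_le_sum hθ.1 A (fun e c => e ∉ c)
  simp only [← Finset.not_subset] at hunion
  rw [prob_not hθ.2.2.1] at hunion
  have hmarg : ∀ e ∈ A, prob θ (fun c => e ∉ c) = 1 - p e := fun e he => by
    rw [prob_not hθ.2.2.1, hθ.prob_mem (hA he)]
  rw [Finset.sum_congr rfl hmarg] at hunion
  linarith

end Scenarios

section IndependentCascade

variable {V : Type*} [DecidableEq V] {E A : Finset (V × V)} {p : V × V → ℝ}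

lemma subset_of_thetaIC_ne_zero {c : Finset (V × V)} (hc : thetaIC E p c ≠ 0) : c ⊆ E := by
  by_contra h
  exact hc (if_neg h)

variable [Fintype V]

/-- Expand `∏ e ∈ A, p e = ∏ e ∈ E, (p e + q e)`, where `q = 0` on `A` and `q = 1 - p` off `A`,
as a sum over the subsets of `E`. -/
lemma prob_thetaIC_subset (hA : A ⊆ E) :
    prob (thetaIC E p) (fun c => A ⊆ c) = ∏ e ∈ A, p e := by
  classical
  set q : V × V → ℝ := fun e => if e ∈ A then 0 else 1 - p e
  have hexpand : ∏ e ∈ A, p e = ∏ e ∈ E, (p e + q e) := by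
    rw [← Finset.prod_sdiff hA]
    have hout : ∏ e ∈ E \ A, (p e + q e) = 1 :=
      Finset.prod_eq_one fun e he => by simp [q, (Finset.mem_sdiff.mp he).2]
    have hin : ∏ e ∈ A, (p e + q e) = ∏ e ∈ A, p e :=
      Finset.prod_congr rfl fun e he => by simp [q, he]
    rw [hout, hin, one_mul]
  rw [hexpand, Finset.prod_add, prob,
    ← Finset.sum_subset (Finset.subset_univ E.powerset) fun c _ hc => by
      simp [thetaIC, Finset.mem_powerset.not.mp hc]]
  refine Finset.sum_congr rfl fun c hc => ?_
  rw [Finset.mem_powerset] at hc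
  by_cases hAc : A ⊆ c
  · have hq : ∏ e ∈ E \ c, q e = ∏ e ∈ E \ c, (1 - p e) :=
      Finset.prod_congr rfl fun e he => if_neg fun heA => (Finset.mem_sdiff.mp he).2 (hAc heA)
    simp [thetaIC, hAc, hc, hq]
  · obtain ⟨e, heA, hec⟩ := Finset.not_subset.mp hAc
    have hq : ∏ e ∈ E \ c, q e = 0 :=
      Finset.prod_eq_zero (Finset.mem_sdiff.mpr ⟨hA heA, hec⟩) (if_pos heA)
    simp [hAc, hq]

end IndependentCascade

section Mixture

variable {V : Type*} [Fintype V] [DecidableEq V] {ι : Type*} {s : Finset ι} {w : ι → ℝ}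
  {σ : ι → Finset (V × V)}

def scenarioMixture (s : Finset ι) (w : ι → ℝ) (σ : ι → Finset (V × V))
    (c : Finset (V × V)) : ℝ :=
  ∑ k ∈ s, if σ k = c then w k else 0

lemma sum_scenarioMixture_mul (f : Finset (V × V) → ℝ) :
    ∑ c, scenarioMixture s w σ c * f c = ∑ k ∈ s, w k * f (σ k) := by
  simp only [scenarioMixture, Finset.sum_mul, ite_mul, zero_mul]
  rw [Finset.sum_comm]
  simp

lemma expInf_scenarioMixture (S : Finset V) :
    expInf (scenarioMixture s w σ) S = ∑ k ∈ s, w k * R (σ k) S :=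
  sum_scenarioMixture_mul _

lemma memTheta_scenarioMixture {E : Finset (V × V)} {p : V × V → ℝ}
    (hw : ∀ k ∈ s, 0 ≤ w k) (hw1 : ∑ k ∈ s, w k = 1) (hσ : ∀ k ∈ s, σ k ⊆ E)
    (hp : ∀ e ∈ E, ∑ k ∈ s, (if e ∈ σ k then w k else 0) = p e) :
    memTheta E p (scenarioMixture s w σ) := by
  refine ⟨fun c => Finset.sum_nonneg fun k hk => ?_, fun c hc => ?_, ?_, fun e he => ?_⟩
  · split_ifs
    exacts [hw k hk, le_rfl]
  · obtain ⟨k, hk, hkc⟩ := Finset.exists_ne_zero_of_sum_ne_zero hc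
    have hσc : σ k = c := by
      by_contra h
      exact hkc (if_neg h)
    exact hσc ▸ hσ k hk
  · rw [← hw1]
    simpa using sum_scenarioMixture_mul (s := s) (w := w) (σ := σ) (fun _ => 1)
  · simpa [← hp e he] using sum_scenarioMixture_mul (s := s) (w := w) (σ := σ)
      (fun c => if e ∈ c then 1 else 0)

end Mixture

lemma sum_range_natCast_id (n : ℕ) : ∑ i ∈ Finset.range n, (i : ℝ) = n * (n - 1) / 2 := by
  rcases n with _ | m
  · simp
  · have hgauss := congrArg (Nat.cast (R := ℝ)) (Finset.sum_range_id_mul_two (m + 1))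
    push_cast [Nat.add_sub_cancel] at hgauss
    push_cast
    linarith

section PathGraph

variable {n : ℕ}

def pathE (n : ℕ) : Finset (Fin n × Fin n) :=
  Finset.univ.filter fun e => (e.2 : ℕ) = e.1 + 1

def prefixEdges (n : ℕ) (i : Fin n) : Finset (Fin n × Fin n) :=
  (pathE n).filter fun e => (e.2 : ℕ) ≤ i

lemma mem_pathE {e : Fin n × Fin n} : e ∈ pathE n ↔ (e.2 : ℕ) = e.1 + 1 := by
  simp [pathE]

lemma mem_prefixEdges {i : Fin n} {e : Fin n × Fin n} :
    e ∈ prefixEdges n i ↔ (e.2 : ℕ) = e.1 + 1 ∧ (e.2 : ℕ) ≤ i := by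
  simp [prefixEdges, mem_pathE]

lemma prefixEdges_subset_pathE (i : Fin n) : prefixEdges n i ⊆ pathE n :=
  Finset.filter_subset _ _

lemma card_prefixEdges (i : Fin n) : (prefixEdges n i).card = i := by
  have hcard :
      (prefixEdges n i).card = (Finset.univ.filter fun j : Fin n => (j : ℕ) < i).card := by
    refine Finset.card_bij (fun e _ => e.1) (fun e he => ?_) (fun e he e' he' h => ?_)
      (fun j hj => ?_)
    · rw [mem_prefixEdges] at he
      simp only [Finset.mem_filter, Finset.mem_univ, true_and]
      omega
    · rw [mem_prefixEdges] at he he'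
      exact Prod.ext h (Fin.ext (by rw [he.1, he'.1, h]))
    · simp only [Finset.mem_filter, Finset.mem_univ, true_and] at hj
      exact ⟨(j, ⟨j + 1, by omega⟩), mem_prefixEdges.mpr ⟨rfl, hj⟩, rfl⟩
  rw [hcard, Fin.card_filter_val_lt, min_eq_right i.isLt.le]

lemma influenced_pathE_iff (hn : 0 < n) {c : Finset (Fin n × Fin n)} (hc : c ⊆ pathE n)
    (i : Fin n) : influenced c {⟨0, hn⟩} i ↔ prefixEdges n i ⊆ c := by
  simp only [influenced, Finset.mem_singleton, exists_eq_left]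
  constructor
  · intro hreach
    induction hreach with
    | refl => intro e he; simp [mem_prefixEdges] at he; omega
    | @tail j i _ hji ih =>
      have hij : (i : ℕ) = j + 1 := mem_pathE.mp (hc hji)
      intro e he
      rw [mem_prefixEdges] at he
      by_cases hej : (e.2 : ℕ) ≤ j
      · exact ih (mem_prefixEdges.mpr ⟨he.1, hej⟩)
      · have he_eq : e = (j, i) :=
          Prod.ext (Fin.ext (show (e.1 : ℕ) = j by omega))
            (Fin.ext (show (e.2 : ℕ) = i by omega))
        exact he_eq ▸ hji
  · obtain ⟨m, hm⟩ := i
    induction m with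
    | zero => intro _; rfl
    | succ m ih =>
      intro hsub
      have hprev : prefixEdges n ⟨m, by omega⟩ ⊆ c := fun e he =>
        hsub (mem_prefixEdges.mpr ⟨(mem_prefixEdges.mp he).1, (mem_prefixEdges.mp he).2.trans
          (Nat.le_succ m)⟩)
      exact (ih (by omega) hprev).tail (hsub (mem_prefixEdges.mpr ⟨rfl, le_rfl⟩))

lemma expInf_pathE (hn : 0 < n) {θ : Finset (Fin n × Fin n) → ℝ}
    (hθ : ∀ c, θ c ≠ 0 → c ⊆ pathE n) :
    expInf θ {⟨0, hn⟩} = ∑ i : Fin n, prob θ (fun c => prefixEdges n i ⊆ c) := by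
  rw [expInf_eq_sum_prob]
  exact Finset.sum_congr rfl fun i _ =>
    prob_congr fun c hc => influenced_pathE_iff hn (hθ c hc) i

lemma fic_pathE (hn : 0 < n) (q : ℝ) :
    fic (pathE n) (fun _ => q) {⟨0, hn⟩} = ∑ i ∈ Finset.range n, q ^ i := by
  rw [fic, expInf_pathE hn fun c => subset_of_thetaIC_ne_zero, ← Fin.sum_univ_eq_sum_range]
  refine Finset.sum_congr rfl fun i _ => ?_
  rw [prob_thetaIC_subset (prefixEdges_subset_pathE i), Finset.prod_const, card_prefixEdges]

lemma sum_range_sub_mul_le_expInf_pathE (hn : 0 < n) {q : ℝ}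
    {θ : Finset (Fin n × Fin n) → ℝ}
    (hθ : memTheta (pathE n) (fun _ => q) θ) :
    ∑ i ∈ Finset.range n, (1 - i * (1 - q)) ≤ expInf θ {⟨0, hn⟩} := by
  rw [expInf_pathE hn hθ.2.1, ← Fin.sum_univ_eq_sum_range]
  refine Finset.sum_le_sum fun i _ => ?_
  have hbound := hθ.one_sub_sum_le_prob_subset (prefixEdges_subset_pathE i)
  rwa [Finset.sum_const, card_prefixEdges, nsmul_eq_mul] at hbound

-- For `k = n - 1` no edge is removed.
def cutPath (n k : ℕ) : Finset (Fin n × Fin n) :=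
  (pathE n).filter fun e => (e.1 : ℕ) ≠ k

lemma cutPath_subset_pathE (k : ℕ) : cutPath n k ⊆ pathE n := Finset.filter_subset _ _

lemma prefixEdges_subset_cutPath_iff {k : ℕ} (hk : k < n) (i : Fin n) :
    prefixEdges n i ⊆ cutPath n k ↔ (i : ℕ) ≤ k := by
  constructor
  · intro hsub
    by_contra hik
    have hedge : ((⟨k, hk⟩ : Fin n), (⟨k + 1, by omega⟩ : Fin n)) ∈ prefixEdges n i :=
      mem_prefixEdges.mpr ⟨rfl, by simp only; omega⟩
    simpa [cutPath] using hsub hedge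
  · intro hik e he
    rw [mem_prefixEdges] at he
    exact Finset.mem_filter.mpr ⟨mem_pathE.mpr he.1, by omega⟩

lemma R_cutPath (hn : 0 < n) {k : ℕ} (hk : k < n) : R (cutPath n k) {⟨0, hn⟩} = k + 1 := by
  have hset : {i | influenced (cutPath n k) {⟨0, hn⟩} i} =
      ↑(Finset.univ.filter fun i : Fin n => (i : ℕ) < k + 1) := by
    ext i
    simp [influenced_pathE_iff hn (cutPath_subset_pathE k), prefixEdges_subset_cutPath_iff hk]
  rw [R, hset, Set.ncard_coe_finset, Fin.card_filter_val_lt, min_eq_right hk]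

noncomputable def worstCasePath (n : ℕ) : Finset (Fin n × Fin n) → ℝ :=
  scenarioMixture (Finset.range n) (fun _ => 1 / (n : ℝ)) (cutPath n)

lemma memTheta_worstCasePath (hn : 0 < n) :
    memTheta (pathE n) (fun _ => 1 - 1 / (n : ℝ)) (worstCasePath n) := by
  have hn' : (n : ℝ) ≠ 0 := by positivity
  refine memTheta_scenarioMixture (fun _ _ => by positivity) ?_
    (fun k _ => cutPath_subset_pathE k) fun e he => ?_
  · simp [hn']
  · have hcut :
        (Finset.range n).filter (fun k => e ∈ cutPath n k) = (Finset.range n).erase e.1 := by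
      ext k
      simp [cutPath, he, eq_comm, and_comm]
    rw [Finset.sum_ite, hcut, Finset.sum_const_zero, add_zero, Finset.sum_const,
      Finset.card_erase_of_mem (Finset.mem_range.mpr e.1.isLt), Finset.card_range, nsmul_eq_mul,
      Nat.cast_pred hn]
    field_simp

lemma expInf_worstCasePath (hn : 0 < n) :
    expInf (worstCasePath n) {⟨0, hn⟩} = 1 + ((n : ℝ) - 1) / 2 := by
  have hn' : (n : ℝ) ≠ 0 := by positivity
  rw [worstCasePath, expInf_scenarioMixture,
    Finset.sum_congr rfl fun k hk => by rw [R_cutPath hn (Finset.mem_range.mp hk)],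
    ← Finset.mul_sum]
  push_cast
  rw [Finset.sum_add_distrib, sum_range_natCast_id, Finset.sum_const, Finset.card_range,
    nsmul_eq_mul, mul_one]
  field_simp
  ring

lemma fcorr_pathE (hn : 0 < n) :
    fcorr (pathE n) (fun _ => 1 - 1 / (n : ℝ)) {⟨0, hn⟩} = 1 + ((n : ℝ) - 1) / 2 := by
  have hlower : ∀ x ∈ {x : ℝ | ∃ θ, memTheta (pathE n) (fun _ => 1 - 1 / (n : ℝ)) θ ∧
      x = expInf θ {⟨0, hn⟩}}, 1 + ((n : ℝ) - 1) / 2 ≤ x := by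
    rintro x ⟨θ, hθ, rfl⟩
    refine le_trans (le_of_eq ?_) (sum_range_sub_mul_le_expInf_pathE hn hθ)
    have hn' : (n : ℝ) ≠ 0 := by positivity
    rw [Finset.sum_sub_distrib, ← Finset.sum_mul, sum_range_natCast_id, Finset.sum_const,
      Finset.card_range, nsmul_eq_mul, mul_one, sub_sub_cancel]
    field_simp
    ring
  have hattained : 1 + ((n : ℝ) - 1) / 2 ∈ {x : ℝ | ∃ θ, memTheta (pathE n)
      (fun _ => 1 - 1 / (n : ℝ)) θ ∧ x = expInf θ {⟨0, hn⟩}} :=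
    ⟨worstCasePath n, memTheta_worstCasePath hn, (expInf_worstCasePath hn).symm⟩
  exact le_antisymm (csInf_le ⟨_, hlower⟩ hattained) (le_csInf ⟨_, hattained⟩ hlower)

end PathGraph

/-- on the directed path graph with `n ≥ 2` nodes, edges `(i, i+1)` and
identical edge likelihoods `1 - 1/n`, the seed set consisting of the first node has
`f^corr = 1 + (n-1)/2` and `f^ic = ∑_{i=0}^{n-1} (1 - 1/n)^i = n (1 - (1 - 1/n)^n)`. -/
theorem series_example (n : ℕ) (hn : 2 ≤ n) :
    fcorr (Finset.univ.filter (fun e : Fin n × Fin n => (e.2 : ℕ) = (e.1 : ℕ) + 1))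
        (fun _ => 1 - 1 / (n : ℝ)) {(⟨0, by omega⟩ : Fin n)} = 1 + ((n : ℝ) - 1) / 2 ∧
      fic (Finset.univ.filter (fun e : Fin n × Fin n => (e.2 : ℕ) = (e.1 : ℕ) + 1))
        (fun _ => 1 - 1 / (n : ℝ)) {(⟨0, by omega⟩ : Fin n)} =
          ∑ i ∈ Finset.range n, (1 - 1 / (n : ℝ)) ^ i ∧
      fic (Finset.univ.filter (fun e : Fin n × Fin n => (e.2 : ℕ) = (e.1 : ℕ) + 1))
        (fun _ => 1 - 1 / (n : ℝ)) {(⟨0, by omega⟩ : Fin n)} =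
          (n : ℝ) * (1 - (1 - 1 / (n : ℝ)) ^ n) := by
  have hn0 : 0 < n := by omega
  have hgeom :
      ∑ i ∈ Finset.range n, (1 - 1 / (n : ℝ)) ^ i = n * (1 - (1 - 1 / (n : ℝ)) ^ n) := by
    have hn' : (n : ℝ) ≠ 0 := by positivity
    rw [geom_sum_eq (by simpa using hn')]
    field_simp
    ring
  exact ⟨fcorr_pathE hn0, fic_pathE hn0 _, (fic_pathE hn0 _).trans hgeom⟩

end CorrIM
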